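/- Stochastic dominance between assignments implies Rawlsian dominance: if assignment y stochastically dominates assignment x (for every agent i and every object o, the probability under y of receiving an object weakly preferred to o is at least that under x, and y ≠ x), then y R-dominates x. -/

import Mathlib

/-! Stochastic dominance says that every cumulative probability `∑_{r(o) ≤ m}` weakly increases;
since rows sum to one, every tail probability `b_i(k)` weakly decreases. Sorting each block
non-increasingly is monotone, so `B^y ≤ B^x` entrywise. Tail probabilities determine a row
(`x_{io} = b_i(r_{io}) - b_i(r_{io} + 1)`), so `y ≠ x` makes some tail, hence some block sum,
strictly smaller; an entrywise-smaller, different vector is lexicographically smaller. -/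

open Finset

/-- An n×n matrix with nonnegative real entries whose rows and columns each sum to 1. -/
def Bistochastic {n : ℕ} (x : Fin n → Fin n → ℝ) : Prop :=
  (∀ i o, 0 ≤ x i o) ∧ (∀ i, ∑ o, x i o = 1) ∧ (∀ o, ∑ i, x i o = 1)

/-- `tailProb rank x i k` = probability that agent `i` receives an object ranked `k`-th
or worse (ranks are 0-indexed: rank 0 = most preferred). -/
def tailProb {n : ℕ} (rank : Fin n → Fin n → Fin n) (x : Fin n → Fin n → ℝ)
    (i k : Fin n) : ℝ :=
  ∑ o ∈ Finset.univ.filter (fun o => k ≤ rank i o), x i o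

/-- The values of `v` rearranged in non-increasing order. -/
noncomputable def sortedDesc {n : ℕ} (v : Fin n → ℝ) : Fin n → ℝ :=
  fun j => v (Tuple.sort (fun i => -v i) j)

/-- Block `t` of `Bvec rank x` is the non-increasing rearrangement of the tail
probabilities at threshold `n-1-t`; so blocks run from the worst rank down. -/
noncomputable def Bvec {n : ℕ} (rank : Fin n → Fin n → Fin n) (x : Fin n → Fin n → ℝ) :
    Fin n → Fin n → ℝ :=
  fun t => sortedDesc (fun i => tailProb rank x i t.rev)

/-- Lexicographic strict order on doubly-indexed vectors (outer index first). -/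
def BlockLexLt {α β : Type*} [LinearOrder α] [LinearOrder β] (u v : α → β → ℝ) : Prop :=
  ∃ t s, u t s < v t s ∧ ∀ t' s', (t' < t ∨ (t' = t ∧ s' < s)) → u t' s' = v t' s'

/-- `x` Rawlsian-dominates `y`. -/
def RDom {n : ℕ} (rank : Fin n → Fin n → Fin n) (x y : Fin n → Fin n → ℝ) : Prop :=
  BlockLexLt (Bvec rank x) (Bvec rank y)

/-- A Rawlsian assignment: a bistochastic matrix not R-dominated by any other. -/
def Rawlsian {n : ℕ} (rank : Fin n → Fin n → Fin n) (x : Fin n → Fin n → ℝ) : Prop :=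
  Bistochastic x ∧ ∀ y, Bistochastic y → ¬ RDom rank y x

/-- `y` stochastically dominates `x` (w.r.t. the ranks): for every agent and every
object, the probability of an object weakly preferred to it is weakly larger, and `y ≠ x`. -/
def SDDominates {n : ℕ} (rank : Fin n → Fin n → Fin n) (y x : Fin n → Fin n → ℝ) : Prop :=
  y ≠ x ∧ ∀ i o, (∑ o' ∈ Finset.univ.filter (fun o' => rank i o' ≤ rank i o), x i o') ≤
    ∑ o' ∈ Finset.univ.filter (fun o' => rank i o' ≤ rank i o), y i o'

/-- `x` is sd-efficient: no bistochastic matrix stochastically dominates it. -/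
def SDEfficient {n : ℕ} (rank : Fin n → Fin n → Fin n) (x : Fin n → Fin n → ℝ) : Prop :=
  ¬ ∃ y, Bistochastic y ∧ SDDominates rank y x

theorem sortedDesc_antitone {n : ℕ} (v : Fin n → ℝ) : Antitone (sortedDesc v) := by
  intro a b hab
  simpa [sortedDesc] using Tuple.monotone_sort (fun i => -v i) hab

theorem sum_sortedDesc {n : ℕ} (v : Fin n → ℝ) : ∑ j, sortedDesc v j = ∑ i, v i :=
  Equiv.sum_comp (Tuple.sort fun i => -v i) v

theorem sortedDesc_le_sortedDesc {n : ℕ} {u v : Fin n → ℝ} (h : u ≤ v) (j : Fin n) :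
    sortedDesc u j ≤ sortedDesc v j := by
  classical
  set σ := Tuple.sort fun i => -u i
  set τ := Tuple.sort fun i => -v i
  -- Pigeonhole: the `j + 1` largest values of `u` and the `n - j` smallest values of `v`
  -- sit at a common index.
  obtain ⟨i, hi⟩ : ((Iic j).image σ ∩ (Ici j).image τ).Nonempty := by
    rw [← card_pos]
    have hunion := card_union_add_card_inter ((Iic j).image σ) ((Ici j).image τ)
    have hle := card_le_univ ((Iic j).image σ ∪ (Ici j).image τ)
    rw [card_image_of_injective _ σ.injective, card_image_of_injective _ τ.injective,
      Fin.card_Iic, Fin.card_Ici] at hunion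
    rw [Fintype.card_fin] at hle
    omega
  obtain ⟨⟨a, ha, rfl⟩, ⟨b, hb, hba⟩⟩ := mem_inter.1 hi |>.imp mem_image.1 mem_image.1
  calc sortedDesc u j ≤ sortedDesc u a := sortedDesc_antitone u (mem_Iic.1 ha)
    _ ≤ v (σ a) := h (σ a)
    _ = sortedDesc v b := by rw [← hba]; rfl
    _ ≤ sortedDesc v j := sortedDesc_antitone v (mem_Ici.1 hb)

theorem blockLexLt_of_lt {α β : Type*} [LinearOrder α] [WellFoundedLT α] [LinearOrder β]
    [WellFoundedLT β] {u v : α → β → ℝ} (h : u < v) : BlockLexLt u v := by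
  obtain ⟨t, hpre, hlt⟩ := Pi.lex_lt_of_lt wellFounded_lt h
  obtain ⟨s, hpre', hlt'⟩ := Pi.lex_lt_of_lt wellFounded_lt hlt
  refine ⟨t, s, hlt', ?_⟩
  rintro t' s' (ht' | ⟨rfl, hs'⟩)
  · exact congrFun (hpre t' ht') s'
  · exact hpre' s' hs'

theorem sum_filter_le_eq_add_sum_filter_succ_le {ι : Type*} [Fintype ι] {e : ι → ℕ}
    (he : Function.Injective e) (f : ι → ℝ) (o : ι) :
    ∑ o' ∈ univ.filter (fun o' => e o ≤ e o'), f o'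
      = f o + ∑ o' ∈ univ.filter (fun o' => e o + 1 ≤ e o'), f o' := by
  classical
  have hset : univ.filter (fun o' => e o ≤ e o')
      = insert o (univ.filter fun o' => e o + 1 ≤ e o') := by
    ext o'
    simp only [mem_filter, mem_insert, mem_univ, true_and]
    constructor
    · intro h
      rcases h.eq_or_lt with he' | hl
      · exact Or.inl (he he'.symm)
      · exact Or.inr hl
    · rintro (rfl | h)
      · exact le_rfl
      · omega
  rw [hset, sum_insert (by simp)]

theorem eq_of_forall_sum_filter_le_eq {ι : Type*} [Fintype ι] {e : ι → ℕ}
    (he : Function.Injective e) {f g : ι → ℝ}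
    (h : ∀ j, ∑ o ∈ univ.filter (fun o => j ≤ e o), f o =
      ∑ o ∈ univ.filter (fun o => j ≤ e o), g o) :
    f = g := by
  funext o
  have h₀ := h (e o)
  have h₁ := h (e o + 1)
  rw [sum_filter_le_eq_add_sum_filter_succ_le he, sum_filter_le_eq_add_sum_filter_succ_le he] at h₀
  linarith

theorem tailProb_eq_one_sub {n : ℕ} (rank : Fin n → Fin n → Fin n) {z : Fin n → Fin n → ℝ}
    {i : Fin n} (hrow : ∑ o, z i o = 1) (k : Fin n) :
    tailProb rank z i k = 1 - ∑ o ∈ univ.filter (fun o => rank i o < k), z i o := by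
  have hsplit := sum_filter_add_sum_filter_not univ (fun o => k ≤ rank i o) (z i)
  simp only [not_le] at hsplit
  rw [tailProb]
  linarith

theorem sum_filter_lt_le_of_forall_sum_filter_le {ι : Type*} [Fintype ι] {n : ℕ} {r : ι → Fin n}
    (hr : Function.Surjective r) {f g : ι → ℝ}
    (h : ∀ o, ∑ o' ∈ univ.filter (fun o' => r o' ≤ r o), f o' ≤
      ∑ o' ∈ univ.filter (fun o' => r o' ≤ r o), g o') (k : Fin n) :
    ∑ o ∈ univ.filter (fun o => r o < k), f o ≤ ∑ o ∈ univ.filter (fun o => r o < k), g o := by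
  rcases Nat.eq_zero_or_pos k with hk | hk
  · have hempty : univ.filter (fun o => r o < k) = ∅ :=
      filter_eq_empty_iff.2 fun o _ => by rw [Fin.lt_def, hk]; omega
    simp [hempty]
  · obtain ⟨o, ho⟩ := hr ⟨k - 1, by omega⟩
    have hpred : ∀ o', r o' < k ↔ r o' ≤ r o := fun o' => by
      rw [ho, Fin.lt_def, Fin.le_def]; dsimp only; omega
    simpa only [hpred] using h o

theorem tailProb_le_of_sdDominates {n : ℕ} {rank : Fin n → Fin n → Fin n}
    (hrank : ∀ i, Function.Surjective (rank i)) {x y : Fin n → Fin n → ℝ}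
    (hx : ∀ i, ∑ o, x i o = 1) (hy : ∀ i, ∑ o, y i o = 1) (hsd : SDDominates rank y x)
    (i k : Fin n) : tailProb rank y i k ≤ tailProb rank x i k := by
  rw [tailProb_eq_one_sub rank (hx i), tailProb_eq_one_sub rank (hy i)]
  linarith [sum_filter_lt_le_of_forall_sum_filter_le (hrank i) (hsd.2 i) k]

theorem exists_tailProb_ne_of_ne {n : ℕ} {rank : Fin n → Fin n → Fin n}
    (hrank : ∀ i, Function.Injective (rank i)) {x y : Fin n → Fin n → ℝ} (hne : y ≠ x) :
    ∃ i k, tailProb rank y i k ≠ tailProb rank x i k := by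
  by_contra! htail
  refine hne (funext fun i => eq_of_forall_sum_filter_le_eq
    (e := fun o => (rank i o : ℕ)) (Fin.val_injective.comp (hrank i)) fun j => ?_)
  rcases lt_or_ge j n with hj | hj
  · simpa [tailProb, Fin.le_def] using htail i ⟨j, hj⟩
  · have hempty : univ.filter (fun o => j ≤ (rank i o : ℕ)) = ∅ :=
      filter_eq_empty_iff.2 fun o _ => by have := (rank i o).isLt; omega
    simp [hempty]

theorem sum_Bvec {n : ℕ} (rank : Fin n → Fin n → Fin n) (x : Fin n → Fin n → ℝ) (t : Fin n) :
    ∑ s, Bvec rank x t s = ∑ i, tailProb rank x i t.rev :=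
  sum_sortedDesc _

/-- Stochastic dominance implies Rawlsian dominance. -/
theorem sd_implies_rdom {n : ℕ} (rank : Fin n → Fin n → Fin n)
    (hrank : ∀ i, Function.Bijective (rank i))
    (x y : Fin n → Fin n → ℝ) (hx : Bistochastic x) (hy : Bistochastic y)
    (hsd : SDDominates rank y x) :
    RDom rank y x := by
  have htail := tailProb_le_of_sdDominates (fun i => (hrank i).2) hx.2.1 hy.2.1 hsd
  obtain ⟨i, k, hik⟩ := exists_tailProb_ne_of_ne (fun i => (hrank i).1) hsd.1
  have hBvec_le : Bvec rank y ≤ Bvec rank x := fun t =>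
    sortedDesc_le_sortedDesc fun j => htail j t.rev
  refine blockLexLt_of_lt (hBvec_le.lt_of_ne fun hBvec => ?_)
  have hsum := congrArg (fun B => ∑ s, B k.rev s) hBvec
  simp only [sum_Bvec, Fin.rev_rev] at hsum
  exact (sum_lt_sum (fun j _ => htail j k) ⟨i, mem_univ _, (htail i k).lt_of_ne hik⟩).ne hsum
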